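/- Let W be a DMC with finite input alphabet X containing the symbol 0 and finite output alphabet Y, with Q0 = W(·|0). Suppose Q0 does not lie in the convex hull of {W(·|x) : x ∈ X, x ≠ 0}. If {P_n} is a sequence of input distributions on X whose induced output distributions Q_n = P_n W converge pointwise to Q0, then lim_{n→∞} P_n(0) = 1, and consequently lim_{n→∞} P_n(x) = 0 for every x ≠ 0. -/

import Mathlib

open Filter
open scoped BigOperators Topology

/-- `p` is a probability mass function on a finite type. -/
def IsDist {α : Type*} [Fintype α] (p : α → ℝ) : Prop :=
  (∀ a, 0 ≤ p a) ∧ ∑ a, p a = 1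

/-- Output distribution on `Y` induced by input distribution `P` through channel `W`. -/
noncomputable def outDist {X Y : Type*} [Fintype X] (P : X → ℝ) (W : X → Y → ℝ) : Y → ℝ :=
  fun y => ∑ x, P x * W x y

/-!
The output map `P ↦ P W` is continuous on the compact simplex of input distributions, and the
only input distribution with output `W(·|x0)` is the point mass at `x0`: any other one would
exhibit `W(·|x0)` as a convex combination of the remaining rows. A compactness argument then
forces `P_n` to converge to that point mass.
-/

lemma isDist_iff_mem_stdSimplex {α : Type*} [Fintype α] (p : α → ℝ) :
    IsDist p ↔ p ∈ stdSimplex ℝ α :=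
  Iff.rfl

lemma outDist_eq_sum_smul {X Y : Type*} [Fintype X] (P : X → ℝ) (W : X → Y → ℝ) :
    outDist P W = ∑ x, P x • W x := by
  ext y
  simp [outDist]

lemma continuous_outDist {X Y : Type*} [Fintype X] (W : X → Y → ℝ) :
    Continuous fun P : X → ℝ => outDist P W := by
  unfold outDist
  fun_prop

lemma IsDist.apply_eq_zero_of_apply_eq_one {α : Type*} [Fintype α] {p : α → ℝ} (hp : IsDist p)
    {a b : α} (hab : b ≠ a) (ha : p a = 1) : p b = 0 := by
  classical
  have hpair : p b + p a ≤ ∑ c, p c := by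
    rw [← Finset.sum_pair hab]
    exact Finset.sum_le_sum_of_subset_of_nonneg (Finset.subset_univ _) fun c _ _ => hp.1 c
  linarith [hp.1 b, hp.2]

lemma IsDist.apply_eq_one_of_outDist_eq {X Y : Type*} [Fintype X] {W : X → Y → ℝ} {x0 : X}
    (hnotred : W x0 ∉ convexHull ℝ (W '' {x : X | x ≠ x0}))
    {p : X → ℝ} (hp : IsDist p) (hout : outDist p W = W x0) : p x0 = 1 := by
  classical
  by_contra hne
  set s := Finset.univ.erase x0
  have hmass : ∑ x ∈ s, p x = 1 - p x0 := by
    rw [← hp.2, ← Finset.add_sum_erase _ _ (Finset.mem_univ x0)]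
    ring
  have hrest : ∑ x ∈ s, p x • W x = (1 - p x0) • W x0 := by
    have hsplit := Finset.add_sum_erase Finset.univ (fun x => p x • W x) (Finset.mem_univ x0)
    rw [← outDist_eq_sum_smul, hout] at hsplit
    rwa [sub_smul, one_smul, eq_sub_iff_add_eq']
  have hlt : p x0 < 1 :=
    lt_of_le_of_ne (by linarith [Finset.sum_nonneg fun x (_ : x ∈ s) => hp.1 x]) hne
  have hcenter : s.centerMass p W = W x0 := by
    rw [Finset.centerMass, hrest, hmass, smul_smul, inv_mul_cancel₀ (by linarith), one_smul]
  exact hnotred (hcenter ▸ s.centerMass_mem_convexHull (fun x _ => hp.1 x)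
    (by linarith) fun x hx => ⟨x, (Finset.mem_erase.mp hx).1, rfl⟩)

lemma MapClusterPt.eq_of_tendsto {ι β : Type*} [TopologicalSpace β] [T2Space β] {l : Filter ι}
    {v : ι → β} {b b' : β} (hcl : MapClusterPt b' l v) (hv : Tendsto v l (𝓝 b)) : b' = b :=
  eq_of_nhds_neBot (ClusterPt.mono hcl hv)

lemma IsCompact.tendsto_of_tendsto_comp_of_fiber {α β γ ι : Type*} [TopologicalSpace α]
    [TopologicalSpace β] [T2Space β] [TopologicalSpace γ] {K : Set α} (hK : IsCompact K)
    {F : α → β} {g : α → γ} (hF : Continuous F) (hg : Continuous g) {b : β} {c : γ}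
    (hfiber : ∀ p ∈ K, F p = b → g p = c) {l : Filter ι} {u : ι → α}
    (hu : ∀ᶠ i in l, u i ∈ K) (hFu : Tendsto (F ∘ u) l (𝓝 b)) : Tendsto (g ∘ u) l (𝓝 c) := by
  -- A cluster point of `(F, g) ∘ u` lies in the compact image of `K` and has first coordinate `b`.
  have hpair : Tendsto (fun i => (F (u i), g (u i))) l (𝓝 (b, c)) := by
    refine (hK.image (hF.prodMk hg)).tendsto_nhds_of_unique_mapClusterPt
      (hu.mono fun i hi => ⟨u i, hi, rfl⟩) ?_
    rintro _ ⟨p, hpK, rfl⟩ hcl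
    have hFp : F p = b := (hcl.tendsto_comp continuous_fst.continuousAt).eq_of_tendsto hFu
    simp only [hFp, hfiber p hpK hFp]
  exact (continuous_snd.tendsto _).comp hpair

theorem statement11_general {X Y : Type*} [Fintype X] [Fintype Y]
    (W : X → Y → ℝ) (x0 : X)
    (hnotred : W x0 ∉ convexHull ℝ (W '' {x : X | x ≠ x0}))
    (P : ℕ → X → ℝ) (hP : ∀ n, IsDist (P n))
    (hconv : ∀ y, Tendsto (fun n => outDist (P n) W y) atTop (nhds (W x0 y))) :
    Tendsto (fun n => P n x0) atTop (nhds 1) ∧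
      ∀ x, x ≠ x0 → Tendsto (fun n => P n x) atTop (nhds 0) := by
  have hsimplex : IsCompact (stdSimplex ℝ X) := isCompact_stdSimplex ℝ X
  have hP_mem : ∀ᶠ n in atTop, P n ∈ stdSimplex ℝ X :=
    Eventually.of_forall fun n => (isDist_iff_mem_stdSimplex _).mp (hP n)
  have hout : Tendsto (fun n => outDist (P n) W) atTop (𝓝 (W x0)) := tendsto_pi_nhds.mpr hconv
  have hfiber : ∀ p ∈ stdSimplex ℝ X, outDist p W = W x0 → p x0 = 1 := fun p hp =>
    IsDist.apply_eq_one_of_outDist_eq hnotred ((isDist_iff_mem_stdSimplex p).mpr hp)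
  refine ⟨hsimplex.tendsto_of_tendsto_comp_of_fiber (continuous_outDist W) (continuous_apply x0)
    hfiber hP_mem hout, fun x hx => ?_⟩
  refine hsimplex.tendsto_of_tendsto_comp_of_fiber (continuous_outDist W) (continuous_apply x)
    (fun p hp hpW => ?_) hP_mem hout
  exact ((isDist_iff_mem_stdSimplex p).mpr hp).apply_eq_zero_of_apply_eq_one hx (hfiber p hp hpW)

theorem statement11 {X Y : Type*} [Fintype X] [Fintype Y]
    (W : X → Y → ℝ) (x0 : X) (hW : ∀ x, IsDist (W x))
    (hinj : Function.Injective W)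
    (hnotred : W x0 ∉ convexHull ℝ (W '' {x : X | x ≠ x0}))
    (P : ℕ → X → ℝ) (hP : ∀ n, IsDist (P n))
    (hconv : ∀ y, Tendsto (fun n => outDist (P n) W y) atTop (nhds (W x0 y))) :
    Tendsto (fun n => P n x0) atTop (nhds 1) ∧
      ∀ x, x ≠ x0 → Tendsto (fun n => P n x) atTop (nhds 0) :=
  statement11_general W x0 hnotred P hP hconv
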